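/- arXiv:0704.0412 — 4 statements merged into one kernel-verified Lean document; each statement's English description precedes it below -/
import Mathlib

section
/- (Berman–Higman) Let G be a finite group and let u be a torsion unit of augmentation one in the integral group ring ZG. If z is an element of the center of G and the coefficient of z in u is nonzero, then u = z. -/
/-! Multiplying by `z⁻¹` reduces the theorem to `z = 1`. If `v ∈ ℤG` has finite order and
`a = v₁ ≠ 0`, left multiplication by `v` on `ℂG` has finite order, hence is semisimple with
eigenvalues roots of unity; its trace is `|G| a` with `|a| ≥ 1`, so all `|G|` eigenvalues equal
`a`. A semisimple map with a single eigenvalue `a` is the scalar `a`, so `v = a`, and augmentation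
one forces `a = 1`. -/

open scoped Classical

/-- The partial augmentation of `u ∈ ℤG` at (the conjugacy class of) `x ∈ G`. -/
noncomputable def partialAug {G : Type*} [Group G] [Fintype G]
    (x : G) (u : MonoidAlgebra ℤ G) : ℤ :=
  ∑ g : G, if IsConj x g then u.coeff g else 0

/-- The augmentation ring homomorphism `ℤG → ℤ`. -/
noncomputable def augMap (G : Type*) [Group G] : MonoidAlgebra ℤ G →+* ℤ :=
  MonoidAlgebra.liftNCRingHom (RingHom.id ℤ) (1 : G →* ℤ) (fun _ _ => Commute.all _ _)

/-- `V(ℤG)`, the group of units of augmentation one in `ℤG`. -/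
noncomputable def V (G : Type*) [Group G] : Subgroup (MonoidAlgebra ℤ G)ˣ :=
  (Units.map (augMap G).toMonoidHom).ker

theorem Complex.eq_one_of_re_eq_one {w : ℂ} (hw : ‖w‖ ≤ 1) (hre : w.re = 1) : w = 1 := by
  refine Complex.ext hre (not_not.mp fun him => ?_)
  have := Complex.abs_re_lt_norm.mpr him
  rw [hre, abs_one] at this
  linarith

theorem Complex.eq_of_mem_of_sum_eq_card_smul {s : Multiset ℂ} {c : ℂ} (hs : ∀ μ ∈ s, ‖μ‖ ≤ 1)
    (hsum : s.sum = Multiset.card s • c) (hc : 1 ≤ ‖c‖) : ∀ μ ∈ s, μ = c := by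
  rcases Multiset.empty_or_exists_mem s with rfl | ⟨μ₀, hμ₀⟩
  · simp
  have hcard : (0 : ℝ) < Multiset.card s := by
    exact_mod_cast Multiset.card_pos_iff_exists_mem.mpr ⟨μ₀, hμ₀⟩
  have hc1 : ‖c‖ = 1 := by
    refine le_antisymm (le_of_mul_le_mul_left ?_ hcard) hc
    calc (Multiset.card s : ℝ) * ‖c‖ = ‖s.sum‖ := by simp [hsum]
      _ ≤ (s.map (‖·‖)).sum := norm_multiset_sum_le s
      _ ≤ (s.map fun _ => (1 : ℝ)).sum := Multiset.sum_map_le_sum_map _ _ hs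
      _ = Multiset.card s * 1 := by simp
  have hcc : starRingEnd ℂ c * c = 1 := by
    rw [mul_comm, Complex.mul_conj, Complex.normSq_eq_norm_sq, hc1]; norm_num
  have hre : (s.map fun μ => (starRingEnd ℂ c * μ).re).sum = Multiset.card s := by
    have h := map_multiset_sum Complex.reAddGroupHom (s.map (starRingEnd ℂ c * ·))
    rw [Multiset.map_map, Multiset.sum_map_mul_left, Multiset.map_id', hsum, nsmul_eq_mul,
      mul_left_comm, hcc, mul_one] at h
    simpa using h.symm
  have hle : ∀ μ ∈ s, (starRingEnd ℂ c * μ).re ≤ 1 := fun μ hμ =>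
    (Complex.re_le_norm _).trans (by simpa [hc1] using hs μ hμ)
  intro μ hμ
  by_contra hne
  have hlt : (starRingEnd ℂ c * μ).re < 1 := by
    refine (hle μ hμ).lt_of_ne fun h => hne ?_
    have h1 := Complex.eq_one_of_re_eq_one (by simpa [hc1] using hs μ hμ) h
    linear_combination c * h1 - μ * hcc
  have := Multiset.sum_lt_sum hle ⟨μ, hμ, hlt⟩
  simp only [Multiset.map_const', Multiset.sum_replicate, nsmul_eq_mul, mul_one] at this
  linarith

open Polynomial

namespace Module.End

section Field

variable {K V : Type*} [Field K] [AddCommGroup V] [Module K V]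

theorem isSemisimple_of_pow_eq_one {f : End K V} {n : ℕ} (hn : (n : K) ≠ 0) (hf : f ^ n = 1) :
    f.IsSemisimple :=
  isSemisimple_of_squarefree_aeval_eq_zero (X_pow_sub_one_separable_iff.mpr hn).squarefree
    (by simp [hf])

theorem HasEigenvalue.pow_eq_one {f : End K V} {μ : K} (hμ : f.HasEigenvalue μ) {n : ℕ}
    (hf : f ^ n = 1) : μ ^ n = 1 := by
  obtain ⟨v, hv⟩ := hμ.exists_hasEigenvector
  refine smul_left_injective K hv.2 ?_
  simpa [hf] using (hv.pow_apply n).symm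

end Field

variable {V : Type*} [AddCommGroup V] [Module ℂ V] [FiniteDimensional ℂ V]

theorem eq_algebraMap_of_pow_eq_one {f : End ℂ V} {n : ℕ} (hn : n ≠ 0) (hf : f ^ n = 1) {c : ℂ}
    (htr : LinearMap.trace ℂ V f = finrank ℂ V • c) (hc : 1 ≤ ‖c‖) :
    f = algebraMap ℂ (End ℂ V) c := by
  have hsplit : f.charpoly.Splits := IsAlgClosed.splits _
  have hcard : Multiset.card f.charpoly.roots = finrank ℂ V := by
    rw [splits_iff_card_roots.mp hsplit, LinearMap.charpoly_natDegree]
  have hroots : ∀ μ ∈ f.charpoly.roots, μ = c := by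
    refine Complex.eq_of_mem_of_sum_eq_card_smul (fun μ hμ => ?_) ?_ hc
    · have hμ' : f.HasEigenvalue μ := by
        rw [hasEigenvalue_iff_isRoot_charpoly]; exact isRoot_of_mem_roots hμ
      exact (Complex.norm_eq_one_of_pow_eq_one (hμ'.pow_eq_one hf) hn).le
    · rw [← trace_eq_sum_roots_charpoly_of_splits hsplit, htr, hcard]
  have hcharpoly : f.charpoly = (X - C c) ^ finrank ℂ V := by
    rw [hsplit.eq_prod_roots_of_monic (LinearMap.charpoly_monic f),
      Multiset.eq_replicate_of_mem hroots, hcard, Multiset.map_replicate, Multiset.prod_replicate]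
  have hnil : IsNilpotent (f - algebraMap ℂ (End ℂ V) c) :=
    ⟨finrank ℂ V, by simpa [hcharpoly] using LinearMap.aeval_self_charpoly f⟩
  have hss : (f - algebraMap ℂ (End ℂ V) c).IsSemisimple :=
    isSemisimple_sub_algebraMap_iff.mpr (isSemisimple_of_pow_eq_one (by exact_mod_cast hn) hf)
  exact sub_eq_zero.mp (eq_zero_of_isNilpotent_isSemisimple hnil hss)

end Module.End

namespace MonoidAlgebra

theorem trace_mulLeft {k G : Type*} [CommRing k] [Group G] [Fintype G] (w : MonoidAlgebra k G) :
    LinearMap.trace k (MonoidAlgebra k G) (LinearMap.mulLeft k w) = Fintype.card G • w.coeff 1 := by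
  have hdiag : ∀ g : G, LinearMap.toMatrix (MonoidAlgebra.basis G k) (MonoidAlgebra.basis G k)
      (LinearMap.mulLeft k w) g g = w.coeff 1 := fun g => by
    rw [LinearMap.toMatrix_apply]
    show (w * single g 1).coeff g = _
    simp
  rw [LinearMap.trace_eq_matrix_trace k (MonoidAlgebra.basis G k), Matrix.trace]
  simp only [Matrix.diag_apply, hdiag, Finset.sum_const, Finset.card_univ]

variable {G : Type*} [Group G] [Fintype G]

theorem eq_single_one_of_isOfFinOrder {v : MonoidAlgebra ℤ G} (hv : IsOfFinOrder v)
    (h1 : v.coeff 1 ≠ 0) : v = single 1 (v.coeff 1) := by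
  obtain ⟨n, hn, hvn⟩ := hv.exists_pow_eq_one
  set φ := mapRingHom G (Int.castRingHom ℂ)
  have hpow : LinearMap.mulLeft ℂ (φ v) ^ n = 1 := by
    rw [LinearMap.pow_mulLeft, ← map_pow, hvn, map_one, LinearMap.mulLeft_one, Module.End.one_eq_id]
  have htr : LinearMap.trace ℂ _ (LinearMap.mulLeft ℂ (φ v)) =
      Module.finrank ℂ (MonoidAlgebra ℂ G) • ((v.coeff 1 : ℤ) : ℂ) := by
    rw [trace_mulLeft, Module.finrank_eq_card_basis (MonoidAlgebra.basis G ℂ)]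
    simp [φ]
  have hnorm : 1 ≤ ‖((v.coeff 1 : ℤ) : ℂ)‖ := by
    rw [Complex.norm_intCast]; exact_mod_cast Int.one_le_abs h1
  have hscalar := Module.End.eq_algebraMap_of_pow_eq_one hn.ne' hpow htr hnorm
  have hφ : φ v = φ (single 1 (v.coeff 1)) := by
    simpa [φ, intCast_def] using LinearMap.congr_fun hscalar 1
  exact map_injective _ (Int.cast_injective (α := ℂ)) hφ

end MonoidAlgebra

theorem augMap_single {G : Type*} [Group G] (g : G) (r : ℤ) :
    augMap G (MonoidAlgebra.single g r) = r := by
  simp [augMap, MonoidAlgebra.liftNCRingHom, MonoidAlgebra.liftNC_single]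

theorem augMap_eq_one_of_mem_V {G : Type*} [Group G] {u : (MonoidAlgebra ℤ G)ˣ} (hu : u ∈ V G) :
    augMap G u = 1 :=
  congrArg Units.val (MonoidHom.mem_ker.mp hu)

/-- Berman–Higman: a torsion unit of augmentation one with nonzero coefficient
at a central group element `z` equals `z`. -/
theorem stmt1 {G : Type*} [Group G] [Fintype G] (u : (MonoidAlgebra ℤ G)ˣ)
    (hu : u ∈ V G) (htor : IsOfFinOrder u)
    (z : G) (hz : z ∈ Subgroup.center G)
    (hcoeff : (u : MonoidAlgebra ℤ G).coeff z ≠ 0) :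
    (u : MonoidAlgebra ℤ G) = MonoidAlgebra.single z 1 := by
  set v := (u : MonoidAlgebra ℤ G) * MonoidAlgebra.single z⁻¹ 1
  have hcomm : Commute (u : MonoidAlgebra ℤ G) (MonoidAlgebra.single z⁻¹ 1) :=
    (MonoidAlgebra.single_commute (fun g => (Subgroup.mem_center_iff.mp (inv_mem hz) g).symm)
      Commute.one_left _).symm
  have hv : IsOfFinOrder v :=
    hcomm.isOfFinOrder_mul ((Units.coeHom _).isOfFinOrder htor)
      ((MonoidAlgebra.of ℤ G).isOfFinOrder (isOfFinOrder_of_finite z⁻¹))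
  have hv1 : v.coeff 1 = (u : MonoidAlgebra ℤ G).coeff z := by simp [v]
  have hvs := MonoidAlgebra.eq_single_one_of_isOfFinOrder hv (hv1 ▸ hcoeff)
  have haug : v.coeff 1 = 1 := by
    have h : augMap G v = 1 := by
      simp only [v, map_mul, augMap_eq_one_of_mem_V hu, augMap_single, one_mul]
    rwa [hvs, augMap_single] at h
  calc (u : MonoidAlgebra ℤ G) = v * MonoidAlgebra.single z 1 := by
        simp [v, mul_assoc, MonoidAlgebra.single_mul_single, ← MonoidAlgebra.one_def]
    _ = MonoidAlgebra.single z 1 := by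
        rw [hvs, haug, MonoidAlgebra.single_mul_single, one_mul, one_mul]
end

section
/- Let G be a finite group and u a torsion unit in V(ZG) of order n. Then for every x in G whose order divides n, Σ_{s ∈ (Z/nZ)^×} ε_x(u^s) = Σ_{s ∈ (Z/nZ)^×} ε_{x^s}(u). -/
/-!
The matrix of `v ↦ w v g⁻¹` on `ℤG` has trace `|C_G(g)| ε_g(w)`. If `u ^ n = 1 = x ^ n` and
`s t ≡ 1 (mod n)`, the matrix `M` of `v ↦ u v x⁻ᵗ` satisfies `M ^ n = 1`, and `M ^ s` is the matrix
of `v ↦ uˢ v x⁻¹`. The trace of an integer matrix of finite order `n` is unchanged by powers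
coprime to `n`, and `x`, `xᵗ` have the same centralizer, so `ε_x(uˢ) = ε_{xᵗ}(u)`. Summing over
`s ∈ (ℤ/nℤ)ˣ` and reindexing by `s ↦ s⁻¹` gives the theorem.
-/

open scoped Classical

open Finset

section GroupAlgebra

variable {R G : Type*} [Semiring R] [Group G] [Fintype G]

lemma MonoidAlgebra.coeff_mul_eq_sum (x y : MonoidAlgebra R G) (g : G) :
    (x * y).coeff g = ∑ h, x.coeff h * y.coeff (h⁻¹ * g) := by
  rw [MonoidAlgebra.coeff_mul_apply_left, Finsupp.sum_fintype _ _ (by simp)]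

/-- The matrix of `v ↦ w * v * g⁻¹` on `R[G]` in the basis `G`. -/
noncomputable def bimulMatrix : MonoidAlgebra R G × G →* Matrix G G R where
  toFun p := Matrix.of fun h k => p.1.coeff (h * p.2 * k⁻¹)
  map_one' := by
    ext h k
    simp [Matrix.of_apply, MonoidAlgebra.one_def, MonoidAlgebra.coeff_single, Finsupp.single_apply,
      Matrix.one_apply, mul_inv_eq_one, eq_comm]
  map_mul' p q := by
    ext h k
    simp only [Matrix.mul_apply, Matrix.of_apply, Prod.fst_mul, Prod.snd_mul]
    rw [MonoidAlgebra.coeff_mul_eq_sum]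
    refine Fintype.sum_equiv ((Equiv.inv G).trans (Equiv.mulRight (h * p.2))) _ _ fun m => ?_
    simp only [Equiv.trans_apply, Equiv.inv_apply, Equiv.coe_mulRight]
    congr 2 <;> group

lemma trace_bimulMatrix (w : MonoidAlgebra R G) (g : G) :
    (bimulMatrix (w, g)).trace = ∑ h, w.coeff (h * g * h⁻¹) := rfl

end GroupAlgebra

section Conjugation

variable {G : Type*} [Group G] [Fintype G]

lemma card_conj_eq_card_commute {g k : G} (hk : IsConj g k) :
    #{h | h * g * h⁻¹ = k} = #{c | Commute c g} := by
  obtain ⟨c₀, rfl⟩ := isConj_iff.mp hk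
  refine card_bij' (fun h _ => c₀⁻¹ * h) (fun c _ => c₀ * c) ?_ ?_ ?_ ?_
  · intro h hh
    simp only [mem_filter, mem_univ, true_and] at hh ⊢
    rw [commute_iff_eq, ← mul_inv_eq_iff_eq_mul]
    calc c₀⁻¹ * h * g * (c₀⁻¹ * h)⁻¹ = c₀⁻¹ * (h * g * h⁻¹) * c₀ := by group
      _ = g := by rw [hh]; group
  · intro c hc
    simp only [mem_filter, mem_univ, true_and] at hc ⊢
    rw [mul_assoc c₀, hc.eq]; group
  · intro h _; group
  · intro c _; group

lemma sum_conj_eq_card_commute_smul {M : Type*} [AddCommMonoid M] (f : G → M) (g : G) :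
    ∑ h, f (h * g * h⁻¹) = #{c | Commute c g} • ∑ k, if IsConj g k then f k else 0 := by
  rw [← sum_fiberwise univ (fun h => h * g * h⁻¹), smul_sum]
  refine sum_congr rfl fun k _ => ?_
  split_ifs with hk
  · rw [sum_congr rfl fun h hh => by rw [(mem_filter.1 hh).2], sum_const,
      card_conj_eq_card_commute hk]
  · rw [smul_zero, sum_eq_zero]
    intro h hh
    exact absurd (isConj_iff.mpr ⟨h, (mem_filter.1 hh).2⟩) hk

lemma trace_bimulMatrix_eq_mul_partialAug (w : MonoidAlgebra ℤ G) (g : G) :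
    (bimulMatrix (w, g)).trace = #{c | Commute c g} * partialAug g w := by
  rw [trace_bimulMatrix, sum_conj_eq_card_commute_smul, nsmul_eq_mul, partialAug]

lemma card_commute_eq_of_pow_eq {x y : G} {s t : ℕ} (hy : y = x ^ t) (hx : x = y ^ s) :
    #{c | Commute c x} = #{c | Commute c y} := by
  congr 1
  ext c
  simp only [mem_filter, mem_univ, true_and]
  exact ⟨fun h => hy ▸ h.pow_right t, fun h => hx ▸ h.pow_right s⟩

end Conjugation

namespace Matrix

variable {ι : Type*} [Fintype ι] [DecidableEq ι]

lemma trace_pow_prime_modEq (M : Matrix ι ι ℤ) (p : ℕ) [Fact p.Prime] :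
    (M ^ p).trace ≡ M.trace [ZMOD p] := by
  rw [← ZMod.intCast_eq_intCast_iff]
  have hcast (A : Matrix ι ι ℤ) :
      (A.trace : ZMod p) = ((Int.castRingHom (ZMod p)).mapMatrix A).trace := by
    simp [Matrix.trace]
  rw [hcast, hcast, map_pow, ZMod.trace_pow_card, ZMod.pow_card]

/-- For a prime `p ≡ s (mod n)` the Frobenius congruence gives `p ∣ tr (M ^ s) - tr M`, and
Dirichlet's theorem supplies such a `p` beyond twice any bound on the finitely many `tr (M ^ k)`. -/
lemma trace_pow_eq_of_pow_eq_one {M : Matrix ι ι ℤ} {n s : ℕ} (hM : M ^ n = 1)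
    (hs : s.Coprime n) : (M ^ s).trace = M.trace := by
  rcases Nat.eq_zero_or_pos n with rfl | hn
  · rw [(Nat.coprime_zero_right s).mp hs, pow_one]
  have : NeZero n := ⟨hn.ne'⟩
  have pow_mod : ∀ k, M ^ k = M ^ (k % n) := fun k => by
    conv_lhs => rw [← Nat.div_add_mod k n, pow_add, pow_mul, hM, one_pow, one_mul]
  set C := (range n).sup fun j => (M ^ j).trace.natAbs
  have bound : ∀ k, (M ^ k).trace.natAbs ≤ C := fun k => by
    rw [pow_mod k]
    exact le_sup (f := fun j => (M ^ j).trace.natAbs) (mem_range.mpr (Nat.mod_lt _ hn))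
  obtain ⟨p, hpC, hp, hps⟩ :=
    Nat.forall_exists_prime_gt_and_eq_mod ((ZMod.isUnit_iff_coprime s n).mpr hs) (2 * C)
  have : Fact p.Prime := ⟨hp⟩
  have hMp : M ^ p = M ^ s := by
    rw [pow_mod p, pow_mod s, ← ZMod.val_natCast, hps, ZMod.val_natCast]
  have hdvd : (p : ℤ) ∣ (M ^ s).trace - M.trace := by
    rw [← hMp]; exact (trace_pow_prime_modEq M p).symm.dvd
  have hlt : |(M ^ s).trace - M.trace| < p := by
    have hMs := bound s
    have hM1 := bound 1
    rw [pow_one] at hM1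
    rw [abs_lt]
    omega
  linarith [Int.eq_zero_of_abs_lt_dvd hdvd hlt]

end Matrix

lemma partialAug_pow_eq_partialAug_pow {G : Type*} [Group G] [Fintype G]
    {u : MonoidAlgebra ℤ G} {x : G} {n s t : ℕ} (hu : u ^ n = 1) (hx : x ^ n = 1)
    (hst : s * t ≡ 1 [MOD n]) : partialAug x (u ^ s) = partialAug (x ^ t) u := by
  have hs : s.Coprime n := Nat.Coprime.coprime_mul_right (by simpa using hst.gcd_eq)
  have hxts : (x ^ t) ^ s = x :=
    calc (x ^ t) ^ s = x ^ (s * t) := by rw [← pow_mul, mul_comm]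
      _ = x ^ 1 := pow_eq_pow_iff_modEq.mpr (hst.of_dvd (orderOf_dvd_of_pow_eq_one hx))
      _ = x := pow_one x
  have hM : bimulMatrix (u, x ^ t) ^ n = 1 := by
    rw [← map_pow, Prod.pow_mk, hu, ← pow_mul, mul_comm, pow_mul, hx, one_pow, Prod.mk_one_one,
      map_one]
  have htrace := Matrix.trace_pow_eq_of_pow_eq_one hM hs
  rw [← map_pow, Prod.pow_mk, hxts, trace_bimulMatrix_eq_mul_partialAug,
    trace_bimulMatrix_eq_mul_partialAug, card_commute_eq_of_pow_eq rfl hxts.symm] at htrace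
  exact mul_left_cancel₀ (by exact_mod_cast (card_pos.mpr ⟨1, by simp⟩).ne') htrace

lemma sum_range_coprime_eq_sum_units {M : Type*} [AddCommMonoid M] {n : ℕ} [NeZero n]
    (f : ℕ → M) : ∑ s ∈ range n with s.Coprime n, f s = ∑ a : (ZMod n)ˣ, f (a : ZMod n).val := by
  refine sum_bij' (fun s hs => ZMod.unitOfCoprime s (mem_filter.mp hs).2)
    (fun a _ => (a : ZMod n).val) (fun _ _ => mem_univ _) (fun a _ => ?_) (fun s hs => ?_)
    (fun a _ => Units.ext (ZMod.natCast_zmod_val _)) (fun s hs => ?_)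
  · exact mem_filter.mpr ⟨mem_range.mpr (ZMod.val_lt _), ZMod.val_coe_unit_coprime a⟩
  all_goals rw [ZMod.coe_unitOfCoprime, ZMod.val_natCast,
      Nat.mod_eq_of_lt (mem_range.mp (mem_filter.mp hs).1)]

lemma ZMod.val_units_mul_val_inv_modEq {n : ℕ} [NeZero n] (a : (ZMod n)ˣ) :
    (a : ZMod n).val * ((a⁻¹ : (ZMod n)ˣ) : ZMod n).val ≡ 1 [MOD n] := by
  rw [← ZMod.natCast_eq_natCast_iff, Nat.cast_mul, ZMod.natCast_zmod_val, ZMod.natCast_zmod_val,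
    Units.mul_inv, Nat.cast_one]

theorem stmt6_general {G : Type*} [Group G] [Fintype G] (u : (MonoidAlgebra ℤ G)ˣ)
    {n : ℕ} (hn : orderOf u = n)
    (x : G) (hx : orderOf x ∣ n) :
    ∑ s ∈ (Finset.range n).filter (fun s => Nat.Coprime s n),
        partialAug x ((u ^ s : (MonoidAlgebra ℤ G)ˣ) : MonoidAlgebra ℤ G)
      = ∑ s ∈ (Finset.range n).filter (fun s => Nat.Coprime s n),
          partialAug (x ^ s) (u : MonoidAlgebra ℤ G) := by
  rcases eq_or_ne n 0 with rfl | hn0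
  · simp
  have : NeZero n := ⟨hn0⟩
  have hun : (u : MonoidAlgebra ℤ G) ^ n = 1 := by
    rw [← Units.val_pow_eq_pow_val, ← hn, pow_orderOf_eq_one, Units.val_one]
  have hxn : x ^ n = 1 := orderOf_dvd_iff_pow_eq_one.mp hx
  simp only [Units.val_pow_eq_pow_val]
  rw [sum_range_coprime_eq_sum_units, sum_range_coprime_eq_sum_units]
  calc ∑ a : (ZMod n)ˣ, partialAug x ((u : MonoidAlgebra ℤ G) ^ (a : ZMod n).val)
      = ∑ a : (ZMod n)ˣ, partialAug (x ^ ((a⁻¹ : (ZMod n)ˣ) : ZMod n).val) u :=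
        Fintype.sum_congr _ _ fun a =>
          partialAug_pow_eq_partialAug_pow hun hxn (ZMod.val_units_mul_val_inv_modEq a)
    _ = ∑ a : (ZMod n)ˣ, partialAug (x ^ (a : ZMod n).val) u :=
        Fintype.sum_equiv (Equiv.inv _) _ _ fun _ => rfl

/-- For a torsion unit `u ∈ V(ℤG)` of order `n` and `x ∈ G` of order dividing `n`,
`Σ_{s ∈ (ℤ/nℤ)ˣ} ε_x(u^s) = Σ_{s ∈ (ℤ/nℤ)ˣ} ε_{x^s}(u)`. -/
theorem stmt6 {G : Type*} [Group G] [Fintype G] (u : (MonoidAlgebra ℤ G)ˣ)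
    (hu : u ∈ V G) (htor : IsOfFinOrder u) {n : ℕ} (hn : orderOf u = n)
    (x : G) (hx : orderOf x ∣ n) :
    ∑ s ∈ (Finset.range n).filter (fun s => Nat.Coprime s n),
        partialAug x ((u ^ s : (MonoidAlgebra ℤ G)ˣ) : MonoidAlgebra ℤ G)
      = ∑ s ∈ (Finset.range n).filter (fun s => Nat.Coprime s n),
          partialAug (x ^ s) (u : MonoidAlgebra ℤ G) :=
  stmt6_general u hn x hx
end

section
/- Let G be a finite group with a cyclic Sylow p-subgroup P, let x ∈ P have order p, and N = N_G(⟨x⟩). Let χ be the character of G induced from the trivial character of P. Then χ(1) + (p+1) Σ_{i=1}^{p-1} χ(x^i) = |G:P| + |N:P|(p^2 − 1). -/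
/-!
Since `P` is cyclic, `⟨x⟩` is its only subgroup of order `p`. So for `p ∤ i` a conjugate
`h xⁱ h⁻¹` lies in `P` iff it lies in `⟨x⟩`, iff `h` normalizes `⟨x⟩`. Hence
`χ(xⁱ) = |N| / |P| = |N : P|` for `1 ≤ i ≤ p - 1`, while `χ(1) = |G : P|`, and the left-hand
side is `|G : P| + (p + 1)(p - 1)|N : P|`.
-/

open scoped Classical

open Subgroup

theorem IsCyclic.mem_zpowers_of_orderOf_eq {α : Type*} [Group α] [Finite α] [IsCyclic α]
    {x y : α} (h : orderOf y = orderOf x) : y ∈ zpowers x := by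
  have := Fintype.ofFinite α
  -- a cyclic group has at most `n` solutions of `a ^ n = 1`, and `⟨x⟩` already supplies `n`
  set S := Finset.univ.filter fun a : α => a ^ orderOf x = 1
  have hsub : (zpowers x : Set α).toFinset ⊆ S := by
    intro a ha
    obtain ⟨k, rfl⟩ := Set.mem_toFinset.mp ha
    simp only [S, Finset.mem_filter, Finset.mem_univ, true_and]
    rw [← zpow_natCast, ← zpow_mul, mul_comm, zpow_mul, zpow_natCast, pow_orderOf_eq_one,
      one_zpow]
  have hcard : S.card ≤ (zpowers x : Set α).toFinset.card := by
    rw [Set.toFinset_card, ← Nat.card_eq_fintype_card, SetLike.coe_sort_coe, Nat.card_zpowers]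
    exact IsCyclic.card_pow_eq_one_le (orderOf_pos x)
  have hyS : y ∈ S := by simp [S, ← h, pow_orderOf_eq_one]
  simpa [← Finset.eq_of_subset_of_card_le hsub hcard] using hyS

namespace Subgroup

variable {G : Type*} [Group G] [Finite G]

theorem mem_zpowers_of_orderOf_eq {H : Subgroup G} [IsCyclic H] {x y : G} (hx : x ∈ H)
    (hy : y ∈ H) (h : orderOf y = orderOf x) : y ∈ zpowers x := by
  have h' : orderOf (⟨y, hy⟩ : H) = orderOf (⟨x, hx⟩ : H) := by
    simpa only [orderOf_mk] using h
  obtain ⟨k, hk⟩ := IsCyclic.mem_zpowers_of_orderOf_eq h'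
  exact ⟨k, congrArg Subtype.val hk⟩

theorem mem_normalizer_zpowers_iff {x h : G} :
    h ∈ normalizer (zpowers x) ↔ h * x * h⁻¹ ∈ zpowers x := by
  refine ⟨fun hh => (mem_normalizer_iff.mp hh x).mp (mem_zpowers x), fun hx => ?_⟩
  refine mem_normalizer_fintype fun y hy => ?_
  obtain ⟨k, rfl⟩ := hy
  rw [SetLike.mem_coe, ← conj_zpow]
  exact zpow_mem hx k

theorem conj_pow_mem_iff_mem_normalizer {H : Subgroup G} [IsCyclic H] {x : G} (hx : x ∈ H)
    {i : ℕ} (hi : (orderOf x).Coprime i) (h : G) :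
    h * x ^ i * h⁻¹ ∈ H ↔ h ∈ normalizer (zpowers x) := by
  rw [mem_normalizer_zpowers_iff]
  constructor
  · intro hconj
    have hord : orderOf (h * x ^ i * h⁻¹) = orderOf x := by
      rw [← MulAut.conj_apply, MulEquiv.orderOf_eq, hi.orderOf_pow]
    have hz : h * x ^ i * h⁻¹ ∈ zpowers x := mem_zpowers_of_orderOf_eq hx hconj hord
    obtain ⟨m, hm⟩ := exists_pow_eq_self_of_coprime hi.symm
    have hxm : h * x * h⁻¹ = (h * x ^ i * h⁻¹) ^ m := by rw [conj_pow, hm]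
    exact hxm ▸ pow_mem hz m
  · intro hxz
    rw [← conj_pow]
    exact zpowers_le.mpr hx (pow_mem hxz i)

end Subgroup

section InducedTrivial

variable {G : Type*} [Group G] [Fintype G]

noncomputable def inducedTrivialChar (H : Subgroup G) (g : G) : ℚ :=
  (Finset.univ.filter fun h : G => h * g * h⁻¹ ∈ H).card / Nat.card H

theorem inducedTrivialChar_eq_relIndex {H K : Subgroup G} (hHK : H ≤ K) {g : G}
    (hg : ∀ h, h * g * h⁻¹ ∈ H ↔ h ∈ K) : inducedTrivialChar H g = H.relIndex K := by
  have hcard : (Finset.univ.filter fun h : G => h * g * h⁻¹ ∈ H).card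
      = Nat.card H * H.relIndex K := by
    rw [Finset.filter_congr fun h _ => hg h, ← relIndex_bot_left,
      relIndex_mul_relIndex _ _ _ bot_le hHK, relIndex_bot_left,
      Nat.card_eq_fintype_card, Fintype.card_subtype]
  have hH : (Nat.card H : ℚ) ≠ 0 := Nat.cast_ne_zero.mpr Nat.card_pos.ne'
  rw [inducedTrivialChar, hcard, Nat.cast_mul, mul_div_cancel_left₀ _ hH]

theorem inducedTrivialChar_one (H : Subgroup G) : inducedTrivialChar H 1 = H.index := by
  rw [inducedTrivialChar_eq_relIndex le_top (by simp [H.one_mem]), relIndex_top_right]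

end InducedTrivial

/-- Rank formula for the character induced from the trivial character of a cyclic
Sylow `p`-subgroup `P`: with `x ∈ P` of order `p` and `N = N_G(⟨x⟩)`,
`χ(1) + (p+1) Σ_{i=1}^{p-1} χ(xⁱ) = |G:P| + |N:P| (p² - 1)`. -/
theorem stmt9 {G : Type*} [Group G] [Fintype G] {p : ℕ} [Fact p.Prime]
    (P : Sylow p G) (hP : IsCyclic P) (x : G) (hxP : x ∈ P) (hx : orderOf x = p) :
    let N : Subgroup G := Subgroup.normalizer (Subgroup.zpowers x)
    -- the induced character `Ind_P^G 1`, given by the standard induction formula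
    let χ : G → ℚ := fun g =>
      (((Finset.univ.filter (fun h : G => h * g * h⁻¹ ∈ (P : Subgroup G))).card : ℚ)) /
        (Nat.card (P : Subgroup G) : ℚ)
    χ 1 + ((p : ℚ) + 1) * ∑ i ∈ Finset.Icc 1 (p - 1), χ (x ^ i)
      = ((P : Subgroup G).index : ℚ)
        + (((P : Subgroup G).subgroupOf N).index : ℚ) * ((p : ℚ) ^ 2 - 1) := by
  intro N χ
  have hp : p.Prime := Fact.out
  have hconj : ∀ i, ¬ p ∣ i → ∀ h, h * x ^ i * h⁻¹ ∈ (P : Subgroup G) ↔ h ∈ N :=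
    fun i hi => conj_pow_mem_iff_mem_normalizer hxP (by rwa [hx, hp.coprime_iff_not_dvd])
  have hPN : (P : Subgroup G) ≤ N := fun h hh =>
    (hconj 1 hp.not_dvd_one h).mp (by simpa using mul_mem (mul_mem hh hxP) (inv_mem hh))
  have hχ : ∀ i ∈ Finset.Icc 1 (p - 1), χ (x ^ i) = (P : Subgroup G).relIndex N := by
    intro i hi
    rw [Finset.mem_Icc] at hi
    have hpi : ¬ p ∣ i := Nat.not_dvd_of_pos_of_lt hi.1 (by omega)
    exact inducedTrivialChar_eq_relIndex hPN (hconj i hpi)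
  change inducedTrivialChar (P : Subgroup G) 1 + _ = _
  rw [inducedTrivialChar_one, Finset.sum_congr rfl hχ, Finset.sum_const, Nat.card_Icc,
    Nat.add_sub_cancel, nsmul_eq_mul, Nat.cast_sub hp.one_le, relIndex]
  ring
end

section
/- Let G be a finite group with a cyclic Sylow p-subgroup P, let x ∈ P have order p, and N = N_G(⟨x⟩). Let λ be a faithful irreducible (one-dimensional) character of the cyclic group P and χ = Ind_P^G λ. Then χ(1) + (p+1) Σ_{i=1}^{p-1} χ(x^i) = |G:P| − |N:P|(p+1). -/
/-!
Conjugating the subgroup `⟨x⟩` of order `p` by `g` gives a subgroup of order `p`; if it meets the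
cyclic group `P` nontrivially it lies in `P`, and a cyclic group has only one subgroup of each
order, so it is `⟨x⟩` and `g ∈ N`. Hence for `g ∉ N` no `g xⁱ g⁻¹` (`0 < i < p`) lies in `P`,
while for `g ∈ N` the values `λ(g xⁱ g⁻¹)` run over the nontrivial `p`-th roots of unity,
which sum to `-1`. Summing over `g` gives `Σ χ(xⁱ) = -|N : P|`, and `χ(1) = |G : P|`.
-/

open scoped Classical

open Subgroup Finset

theorem IsCyclic.zpowers_eq_of_orderOf_eq {α : Type*} [Group α] [Finite α] [IsCyclic α]
    {x y : α} (h : orderOf x = orderOf y) : zpowers x = zpowers y := by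
  have := Fintype.ofFinite α
  have key : ∀ z : α, orderOf z = orderOf x →
      (zpowers z : Set α).toFinset = ({a | a ^ orderOf x = 1} : Finset α) := fun z hz ↦ by
    refine eq_of_subset_of_card_le (fun a ha ↦ ?_) ?_
    · rw [Set.mem_toFinset, SetLike.mem_coe] at ha
      rw [mem_filter_univ, ← orderOf_dvd_iff_pow_eq_one, ← hz]
      exact orderOf_dvd_of_mem_zpowers ha
    · rw [Set.toFinset_card, ← Nat.card_eq_fintype_card, SetLike.coe_sort_coe, Nat.card_zpowers, hz]
      exact IsCyclic.card_pow_eq_one_le (orderOf_pos x)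
  exact SetLike.coe_injective (Set.toFinset_inj.mp ((key x rfl).trans (key y h.symm).symm))

theorem Subgroup.zpowers_eq_of_orderOf_eq {G : Type*} [Group G] {H : Subgroup G} [Finite H]
    [IsCyclic H] {x y : G} (hx : x ∈ H) (hy : y ∈ H) (h : orderOf x = orderOf y) :
    zpowers x = zpowers y := by
  have := congrArg (map H.subtype) <| IsCyclic.zpowers_eq_of_orderOf_eq
    (x := (⟨x, hx⟩ : H)) (y := ⟨y, hy⟩) (by rwa [orderOf_mk, orderOf_mk])
  rwa [MonoidHom.map_zpowers, MonoidHom.map_zpowers] at this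

theorem Subgroup.mem_normalizer_zpowers_iff_s10 {G : Type*} [Group G] {x g : G} :
    g ∈ normalizer (zpowers x : Set G) ↔ zpowers (g * x * g⁻¹) = zpowers x := by
  rw [mem_normalizer_iff_map_conj_eq, MonoidHom.map_zpowers]
  rfl

theorem Subgroup.conj_pow_mem_iff_mem_normalizer_s10 {G : Type*} [Group G] {H : Subgroup G}
    [Finite H] [IsCyclic H] {x : G} (hx : x ∈ H) {i : ℕ} (hi : i.Coprime (orderOf x)) (g : G) :
    g * x ^ i * g⁻¹ ∈ H ↔ g ∈ normalizer (zpowers x : Set G) := by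
  rw [mem_normalizer_zpowers_iff_s10, ← conj_pow]
  set y := g * x * g⁻¹
  have hyx : orderOf y = orderOf x := (MulAut.conj g).orderOf_eq x
  refine ⟨fun hyi ↦ ?_, fun hN ↦ pow_mem (zpowers_le.mpr hx (hN ▸ mem_zpowers y)) i⟩
  have hy : y ∈ H := zpowers_le.mpr hyi (mem_zpowers_pow_iff.mpr (hyx ▸ hi))
  exact zpowers_eq_of_orderOf_eq hy hx hyx

theorem Subgroup.le_normalizer_zpowers {G : Type*} [Group G] {H : Subgroup G}
    [Finite H] [IsCyclic H] {x : G} (hx : x ∈ H) : H ≤ normalizer (zpowers x : Set G) :=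
  fun g hg ↦ (conj_pow_mem_iff_mem_normalizer_s10 hx (Nat.coprime_one_left _) g).mp
    (by simpa using mul_mem (mul_mem hg hx) (inv_mem hg))

theorem sum_Icc_pow_eq_neg_one {K : Type*} [DivisionRing K] {z : K} {n : ℕ}
    (hn : 0 < n) (hz : z ^ n = 1) (hz1 : z ≠ 1) : ∑ i ∈ Icc 1 (n - 1), z ^ i = -1 := by
  have hIcc : Icc 1 (n - 1) = (range n).erase 0 := by
    ext i; simp only [mem_Icc, mem_erase, mem_range]; omega
  rw [hIcc, sum_erase_eq_sub (mem_range.mpr hn), geom_sum_eq hz1, hz, sub_self, zero_div,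
    pow_zero, zero_sub]

theorem MonoidHom.sum_Icc_map_pow_eq_neg_one {A K : Type*} [Group A] [DivisionRing K]
    (f : A →* K) (hf : Function.Injective f) {a : A} (ha : (orderOf a).Prime) :
    ∑ i ∈ Icc 1 (orderOf a - 1), f (a ^ i) = -1 := by
  simp_rw [map_pow]
  refine sum_Icc_pow_eq_neg_one ha.pos (by rw [← map_pow, pow_orderOf_eq_one, map_one]) ?_
  rw [← map_one f, hf.ne_iff]
  exact fun h ↦ ha.one_lt.ne' (orderOf_eq_one_iff.mpr h)

theorem Subgroup.sum_Icc_conj_pow_eq_ite_mem_normalizer {G K : Type*} [Group G] [DivisionRing K] {H : Subgroup G}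
    [Finite H] [IsCyclic H] (f : H →* K) (hf : Function.Injective f) {x : G} (hx : x ∈ H)
    (hp : (orderOf x).Prime) (g : G) :
    ∑ i ∈ Icc 1 (orderOf x - 1), (if h : g * x ^ i * g⁻¹ ∈ H then f ⟨_, h⟩ else 0)
      = if g ∈ normalizer (zpowers x : Set G) then -1 else 0 := by
  split_ifs with hg
  · have hy : g * x * g⁻¹ ∈ H := by
      simpa using (conj_pow_mem_iff_mem_normalizer_s10 hx (Nat.coprime_one_left _) g).mpr hg
    have hyx : orderOf (⟨_, hy⟩ : H) = orderOf x := by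
      rw [orderOf_mk]; exact (MulAut.conj g).orderOf_eq x
    calc _ = ∑ i ∈ Icc 1 (orderOf x - 1), f (⟨_, hy⟩ ^ i) :=
          sum_congr rfl fun i _ ↦ by
            rw [dif_pos (by simpa [conj_pow] using pow_mem hy i)]
            congr 1
            ext
            simp [conj_pow]
      _ = -1 := hyx ▸ f.sum_Icc_map_pow_eq_neg_one hf (hyx ▸ hp)
  · refine sum_eq_zero fun i hi ↦ dif_neg ?_
    rw [mem_Icc] at hi
    have hi : i.Coprime (orderOf x) :=
      (hp.coprime_iff_not_dvd.mpr (Nat.not_dvd_of_pos_of_lt hi.1 (by omega))).symm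
    rwa [conj_pow_mem_iff_mem_normalizer_s10 hx hi]

theorem Subgroup.card_eq_index_subgroupOf_mul_card {G : Type*} [Group G] {H K : Subgroup G}
    (h : H ≤ K) : Nat.card K = (H.subgroupOf K).index * Nat.card H := by
  rw [← (H.subgroupOf K).index_mul_card, Nat.card_congr (subgroupOfEquivOfLe h).toEquiv]

/-- Rank formula for the character induced from a faithful linear character `λ` of a
cyclic Sylow `p`-subgroup `P`: with `x ∈ P` of order `p` and `N = N_G(⟨x⟩)`,
`χ(1) + (p+1) Σ_{i=1}^{p-1} χ(xⁱ) = |G:P| - |N:P| (p + 1)`. -/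
theorem stmt10 {G : Type*} [Group G] [Fintype G] {p : ℕ} [Fact p.Prime]
    (P : Sylow p G) (hP : IsCyclic P) (x : G) (hxP : x ∈ P) (hx : orderOf x = p)
    (lam : (P : Subgroup G) →* ℂ) (hfaithful : Function.Injective lam) :
    let N : Subgroup G := Subgroup.normalizer (Subgroup.zpowers x)
    -- extension of `λ` to `G` by zero
    let lam0 : G → ℂ := fun g => if h : g ∈ (P : Subgroup G) then lam ⟨g, h⟩ else 0
    -- the induced character `Ind_P^G λ`, given by the standard induction formula
    let χ : G → ℂ := fun g =>
      (1 / (Nat.card (P : Subgroup G) : ℂ)) * ∑ h : G, lam0 (h * g * h⁻¹)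
    χ 1 + ((p : ℂ) + 1) * ∑ i ∈ Finset.Icc 1 (p - 1), χ (x ^ i)
      = ((P : Subgroup G).index : ℂ)
        - (((P : Subgroup G).subgroupOf N).index : ℂ) * ((p : ℂ) + 1) := by
  intro N lam0 χ
  subst hx
  have := hP
  have hP_card : (Nat.card P : ℂ) ≠ 0 := Nat.cast_ne_zero.mpr Nat.card_pos.ne'
  have hχ1 : χ 1 = (P : Subgroup G).index := by
    have hone : lam0 1 = 1 := by
      simp only [lam0, dif_pos (one_mem _)]
      exact map_one lam
    simp only [χ, mul_one, mul_inv_cancel, hone, sum_const, card_univ, nsmul_eq_mul]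
    rw [← Nat.card_eq_fintype_card, ← (P : Subgroup G).index_mul_card, Nat.cast_mul]
    field_simp
  have hN : ∑ g : G, (if g ∈ N then (-1 : ℂ) else 0) = -Nat.card N := by
    simp [sum_ite, Fintype.card_subtype]
  have hχx : ∑ i ∈ Icc 1 (orderOf x - 1), χ (x ^ i) = -((P : Subgroup G).subgroupOf N).index :=
    calc ∑ i ∈ Icc 1 (orderOf x - 1), χ (x ^ i)
        = 1 / Nat.card P * ∑ g : G, ∑ i ∈ Icc 1 (orderOf x - 1), lam0 (g * x ^ i * g⁻¹) := by
          simp only [χ, ← mul_sum]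
          rw [sum_comm]
      _ = 1 / Nat.card P * -Nat.card N := by
          simp only [lam0, sum_Icc_conj_pow_eq_ite_mem_normalizer lam hfaithful hxP Fact.out]
          exact congrArg _ hN
      _ = -((P : Subgroup G).subgroupOf N).index := by
          rw [card_eq_index_subgroupOf_mul_card (le_normalizer_zpowers hxP), Nat.cast_mul]
          field_simp
          rfl
  rw [hχ1, hχx]
  ring
end
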